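/- Second factorial moment of the protein number: for all real a, b with 0 < a < b, all real ν > 0 and θ with 0 < θ ≤ 1, setting P_n = P_{0,n} + P_{1,n}, the family (n(n−1)·P_n)_{n∈ℕ} is summable and ∑_{n=0}^∞ n(n−1)·P_n = ν²·(a(a+1)/(C·b(b+1)))·M(a+2, b+2, ν(1−θ)), where C = M(a, b, ν(1−θ)). -/

import Mathlib

open scoped BigOperators

set_option maxHeartbeats 1600000

/-- Pochhammer symbol `(a)ₙ = a(a+1)⋯(a+n−1)`, `(a)₀ = 1`. -/
noncomputable def poch (a : ℝ) (n : ℕ) : ℝ := ∏ k ∈ Finset.range n, (a + k)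

/-- Kummer's confluent hypergeometric function `M(a,b,z)`. -/
noncomputable def kummerM (a b z : ℝ) : ℝ :=
  ∑' k : ℕ, poch a k / poch b k * z ^ k / (Nat.factorial k : ℝ)

/-- Steady-state probability `P_{0,n}` of the binary gene model. -/
noncomputable def P0 (a b ν θ : ℝ) (n : ℕ) : ℝ :=
  (b - a) / (kummerM a b (ν * (1 - θ)) * b) * (ν ^ n / (Nat.factorial n : ℝ)) *
    (poch a n / poch (1 + b) n) * kummerM (a + n) (1 + b + n) (-(ν * θ))

/-- Steady-state probability `P_{1,n}` of the binary gene model. -/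
noncomputable def P1 (a b ν θ : ℝ) (n : ℕ) : ℝ :=
  a / (kummerM a b (ν * (1 - θ)) * b) * (ν ^ n / (Nat.factorial n : ℝ)) *
    (poch (1 + a) n / poch (1 + b) n) * kummerM (1 + a + n) (1 + b + n) (-(ν * θ))

lemma poch_pos {a : ℝ} (ha : 0 < a) (n : ℕ) : 0 < poch a n :=
  Finset.prod_pos fun i _ => by positivity

lemma poch_add (a : ℝ) (m n : ℕ) : poch a (m + n) = poch a m * poch (a + m) n := by
  unfold poch
  rw [Finset.prod_range_add]
  congr 1
  exact Finset.prod_congr rfl fun k _ => by push_cast; ring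

lemma poch_succ (a : ℝ) (n : ℕ) : poch a (n + 1) = poch a n * (a + n) :=
  Finset.prod_range_succ _ _

lemma poch_shift (a : ℝ) (n : ℕ) : a * poch (a + 1) n = poch a n * (a + n) := by
  have h := poch_add a 1 n
  have h1 : poch a 1 = a := by simp [poch]
  rw [h1] at h
  have : (1 + n) = (n + 1) := by omega
  rw [this, poch_succ] at h
  push_cast at h
  linarith [h]

lemma poch_two (a : ℝ) : poch a 2 = a * (a + 1) := by
  simp [poch, Finset.prod_range_succ]

lemma poch_two_add (a : ℝ) (n : ℕ) : poch a (n + 2) = a * (a + 1) * poch (a + 2) n := by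
  have h := poch_add a 2 n
  have : (2 + n) = (n + 2) := by omega
  rw [this] at h
  rw [h, poch_two]
  norm_num

lemma summable_kummer {a b : ℝ} (ha : 0 < a) (hb : 0 < b) (z : ℝ) :
    Summable (fun k : ℕ => poch a k / poch b k * z ^ k / (Nat.factorial k : ℝ)) := by
  set c : ℝ := max (a / b) 1 with hc
  have hc1 : 1 ≤ c := le_max_right _ _
  have hc0 : 0 < c := lt_of_lt_of_le one_pos hc1
  have hab : a / b ≤ c := le_max_left _ _
  have hkey : ∀ k : ℕ, poch a k ≤ c ^ k * poch b k := by
    intro k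
    have : c ^ k * poch b k = ∏ i ∈ Finset.range k, (c * (b + i)) := by
      unfold poch
      rw [Finset.prod_mul_distrib, Finset.prod_const, Finset.card_range]
    rw [this]
    refine Finset.prod_le_prod (fun i _ => by positivity) (fun i _ => ?_)
    have h1 : a ≤ c * b := by
      have := mul_le_mul_of_nonneg_right hab hb.le
      rwa [div_mul_cancel₀ _ hb.ne'] at this
    have h2 : (i : ℝ) ≤ c * i := le_mul_of_one_le_left (Nat.cast_nonneg i) hc1
    nlinarith
  have hbnd : ∀ k : ℕ, |poch a k / poch b k * z ^ k / (Nat.factorial k : ℝ)|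
      ≤ (c * |z|) ^ k / (Nat.factorial k : ℝ) := by
    intro k
    have hpb := poch_pos hb k
    have hpa := poch_pos ha k
    have hfac : (0:ℝ) < (Nat.factorial k : ℝ) := by positivity
    rw [abs_div, abs_mul, abs_div, abs_pow, abs_of_pos hpa, abs_of_pos hpb,
      abs_of_pos hfac, mul_pow]
    rw [div_le_div_iff_of_pos_right hfac]
    rw [div_mul_eq_mul_div, div_le_iff₀ hpb]
    calc poch a k * |z| ^ k ≤ (c ^ k * poch b k) * |z| ^ k := by
          apply mul_le_mul_of_nonneg_right (hkey k) (by positivity)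
      _ = c ^ k * |z| ^ k * poch b k := by ring
  exact Summable.of_abs (Summable.of_nonneg_of_le (fun k => abs_nonneg _) hbnd
    (Real.summable_pow_div_factorial _))

lemma binom_sum (u v : ℝ) (m : ℕ) :
    ∑ p ∈ Finset.HasAntidiagonal.antidiagonal m, u ^ p.1 * v ^ p.2 / ((Nat.factorial p.1 : ℝ) * (Nat.factorial p.2 : ℝ))
      = (u + v) ^ m / (Nat.factorial m : ℝ) := by
  rw [Finset.Nat.sum_antidiagonal_eq_sum_range_succ_mk, add_pow]
  rw [Finset.sum_div]
  refine Finset.sum_congr rfl fun k hk => ?_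
  have hk' : k ≤ m := Nat.lt_succ_iff.mp (Finset.mem_range.mp hk)
  have hch := Nat.choose_mul_factorial_mul_factorial hk'
  have hfk : (0:ℝ) < (Nat.factorial k : ℝ) := by positivity
  have hfmk : (0:ℝ) < (Nat.factorial (m - k) : ℝ) := by positivity
  have hfm : (0:ℝ) < (Nat.factorial m : ℝ) := by positivity
  have hchR : (Nat.choose m k : ℝ) * (Nat.factorial k : ℝ) * (Nat.factorial (m - k) : ℝ)
      = (Nat.factorial m : ℝ) := by exact_mod_cast congrArg (Nat.cast : ℕ → ℝ) hch
  field_simp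
  linear_combination (-(u ^ k * v ^ (m - k))) * hchR

lemma kummer_expand {a b : ℝ} (ha : 0 < a) (hb : 0 < b) (x y : ℝ) :
    Summable (fun n : ℕ => poch a n / poch b n * x ^ n / (Nat.factorial n : ℝ) *
      kummerM (a + n) (b + n) y) ∧
    ∑' n : ℕ, poch a n / poch b n * x ^ n / (Nat.factorial n : ℝ) *
      kummerM (a + n) (b + n) y = kummerM a b (x + y) := by
  have hpa := fun n => poch_pos ha n
  have hpb := fun n => poch_pos hb n
  set F : ℕ × ℕ → ℝ := fun p =>
    poch a (p.1 + p.2) / poch b (p.1 + p.2) * (x ^ p.1 / (Nat.factorial p.1 : ℝ)) *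
      (y ^ p.2 / (Nat.factorial p.2 : ℝ)) with hFdef
  have habs : ∀ p : ℕ × ℕ, |F p| = poch a (p.1 + p.2) / poch b (p.1 + p.2) *
      (|x| ^ p.1 * |y| ^ p.2 / ((Nat.factorial p.1 : ℝ) * (Nat.factorial p.2 : ℝ))) := by
    intro p
    have h1 := hpa (p.1 + p.2); have h2 := hpb (p.1 + p.2)
    have f1 : (0:ℝ) < (Nat.factorial p.1 : ℝ) := by positivity
    have f2 : (0:ℝ) < (Nat.factorial p.2 : ℝ) := by positivity
    rw [hFdef]
    simp only
    rw [abs_mul, abs_mul, abs_div, abs_div, abs_div, abs_pow, abs_pow,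
      abs_of_pos h1, abs_of_pos h2, abs_of_pos f1, abs_of_pos f2]
    ring
  have hdiag : ∀ m : ℕ, ∑ p ∈ Finset.HasAntidiagonal.antidiagonal m, |F p|
      = poch a m / poch b m * ((|x| + |y|) ^ m / (Nat.factorial m : ℝ)) := by
    intro m
    rw [← binom_sum, Finset.mul_sum]
    refine Finset.sum_congr rfl fun p hp => ?_
    have hpm : p.1 + p.2 = m := Finset.HasAntidiagonal.mem_antidiagonal.mp hp
    rw [habs p, hpm]
  have hdiagF : ∀ m : ℕ, ∑ p ∈ Finset.HasAntidiagonal.antidiagonal m, F p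
      = poch a m / poch b m * ((x + y) ^ m / (Nat.factorial m : ℝ)) := by
    intro m
    rw [← binom_sum, Finset.mul_sum]
    refine Finset.sum_congr rfl fun p hp => ?_
    have hpm : p.1 + p.2 = m := Finset.HasAntidiagonal.mem_antidiagonal.mp hp
    rw [hFdef]
    simp only
    rw [hpm]
    ring
  have he : ∀ m : ℕ, ∑' p : {q : ℕ × ℕ // q ∈ Finset.HasAntidiagonal.antidiagonal m}, |F ↑p|
      = poch a m / poch b m * ((|x| + |y|) ^ m / (Nat.factorial m : ℝ)) := by
    intro m
    rw [Finset.tsum_subtype (Finset.HasAntidiagonal.antidiagonal m) (fun q => |F q|)]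
    exact hdiag m
  have hnorm : Summable (fun p : ℕ × ℕ => |F p|) := by
    have hs : Summable (fun s : (Σ n : ℕ, {q : ℕ × ℕ // q ∈ Finset.HasAntidiagonal.antidiagonal n}) => |F ↑s.2|) := by
      apply (summable_sigma_of_nonneg fun _ => abs_nonneg _).2
      refine ⟨fun m => Summable.of_finite, ?_⟩
      have hfe : (fun m : ℕ => ∑' p : {q : ℕ × ℕ // q ∈ Finset.HasAntidiagonal.antidiagonal m}, |F ↑p|)
          = fun m => poch a m / poch b m * ((|x| + |y|) ^ m / (Nat.factorial m : ℝ)) :=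
        funext he
      rw [hfe]
      have := summable_kummer ha hb (|x| + |y|)
      simpa [mul_div_assoc] using this
    exact (Equiv.summable_iff Finset.HasAntidiagonal.sigmaAntidiagonalEquivProd).1 hs
  have hsum : Summable F := Summable.of_norm (by simpa [Real.norm_eq_abs] using hnorm)
  have t2 : ∑' p : ℕ × ℕ, F p = kummerM a b (x + y) := by
    have h2 : Summable (fun s : (Σ n : ℕ, {q : ℕ × ℕ // q ∈ Finset.HasAntidiagonal.antidiagonal n}) => F ↑s.2) :=
      (Equiv.summable_iff Finset.HasAntidiagonal.sigmaAntidiagonalEquivProd).2 hsum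
    have e1 : ∑' p : ℕ × ℕ, F p
        = ∑' s : (Σ n : ℕ, {q : ℕ × ℕ // q ∈ Finset.HasAntidiagonal.antidiagonal n}), F ↑s.2 :=
      (Equiv.tsum_eq Finset.HasAntidiagonal.sigmaAntidiagonalEquivProd F).symm
    rw [e1, Summable.tsum_sigma' (fun m => Summable.of_finite) h2]
    unfold kummerM
    refine tsum_congr fun m => ?_
    rw [Finset.tsum_subtype (Finset.HasAntidiagonal.antidiagonal m) F, hdiagF m]
    ring
  have hbn : ∀ n : ℕ, (0:ℝ) < b + n := fun n => by
    have := Nat.cast_nonneg (α := ℝ) n; linarith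
  have hfib : ∀ n k : ℕ, F (n, k) = (poch a n / poch b n * x ^ n / (Nat.factorial n : ℝ)) *
      (poch (a + n) k / poch (b + n) k * y ^ k / (Nat.factorial k : ℝ)) := by
    intro n k
    rw [hFdef]
    simp only
    rw [poch_add a n k, poch_add b n k]
    have h1 := (hpb n).ne'
    have h2 := (poch_pos (hbn n) k).ne'
    field_simp
  have hinner : ∀ n : ℕ, ∑' k : ℕ, F (n, k)
      = poch a n / poch b n * x ^ n / (Nat.factorial n : ℝ) * kummerM (a + n) (b + n) y := by
    intro n
    rw [tsum_congr (hfib n), tsum_mul_left]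
    rfl
  have houter : Summable (fun n : ℕ => ∑' k : ℕ, F (n, k)) := by
    have h2 : Summable (fun n : ℕ => ∑' k : ℕ, |F (n, k)|) :=
      ((summable_prod_of_nonneg (fun _ => abs_nonneg _)).mp hnorm).2
    refine Summable.of_norm_bounded h2 fun n => ?_
    have hk : Summable fun k => ‖F (n, k)‖ := by
      simpa [Real.norm_eq_abs] using hnorm.prod_factor n
    calc ‖∑' k, F (n, k)‖ ≤ ∑' k, ‖F (n, k)‖ := norm_tsum_le_tsum_norm hk
      _ = ∑' k, |F (n, k)| := by simp [Real.norm_eq_abs]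
  have hfun : (fun n : ℕ => ∑' k : ℕ, F (n, k)) = fun n : ℕ =>
      poch a n / poch b n * x ^ n / (Nat.factorial n : ℝ) * kummerM (a + n) (b + n) y :=
    funext hinner
  constructor
  · rw [← hfun]; exact houter
  · rw [← hfun, ← Summable.tsum_prod' hsum (fun n => hsum.prod_factor n), t2]

lemma kummer_contig {a b : ℝ} (ha : 0 < a) (hb : 0 < b) (z : ℝ) :
    (b - a) * kummerM a (b + 1) z + a * kummerM (a + 1) (b + 1) z = b * kummerM a b z := by
  have ha1 : (0:ℝ) < a + 1 := by linarith
  have hb1 : (0:ℝ) < b + 1 := by linarith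
  have s1 := (summable_kummer ha hb1 z).mul_left (b - a)
  have s2 := (summable_kummer ha1 hb1 z).mul_left a
  unfold kummerM
  rw [← tsum_mul_left, ← tsum_mul_left, ← tsum_mul_left, ← Summable.tsum_add s1 s2]
  refine tsum_congr fun k => ?_
  have h1 := poch_shift a k
  have h2 := poch_shift b k
  have hq := (poch_pos hb k).ne'
  have hq1 := (poch_pos hb1 k).ne'
  field_simp
  linear_combination (z ^ k * poch b k) * h1 - (z ^ k * poch a k) * h2

/-- Second factorial moment of the protein number. -/
theorem second_factorial_moment (a b ν θ : ℝ) (ha : 0 < a) (hab : a < b)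
    (hν : 0 < ν) (hθ0 : 0 < θ) (hθ1 : θ ≤ 1) :
    Summable (fun n : ℕ => (n : ℝ) * ((n : ℝ) - 1) * (P0 a b ν θ n + P1 a b ν θ n)) ∧
    (∑' n : ℕ, (n : ℝ) * ((n : ℝ) - 1) * (P0 a b ν θ n + P1 a b ν θ n)) =
      ν ^ 2 * (a * (a + 1) / (kummerM a b (ν * (1 - θ)) * (b * (b + 1)))) *
        kummerM (a + 2) (b + 2) (ν * (1 - θ)) := by
  have hb : 0 < b := lt_trans ha hab
  have h0 := kummer_expand (a := a + 2) (b := b + 3)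
    (by linarith) (by linarith) ν (-(ν * θ))
  have h1 := kummer_expand (a := a + 3) (b := b + 3)
    (by linarith) (by linarith) ν (-(ν * θ))
  have hνy : ν + -(ν * θ) = ν * (1 - θ) := by ring
  rw [hνy] at h0 h1
  set C := kummerM a b (ν * (1 - θ)) with hC
  set g : ℕ → ℝ := fun n => (n : ℝ) * ((n : ℝ) - 1) * (P0 a b ν θ n + P1 a b ν θ n) with hg
  -- the shifted identity
  have key : ∀ m : ℕ, g (m + 2)
      = ((b - a) / (C * b) * (ν ^ 2 * a * (a + 1) / ((1 + b) * (2 + b)))) *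
          (poch (a + 2) m / poch (b + 3) m * ν ^ m / (Nat.factorial m : ℝ) *
            kummerM (a + 2 + m) (b + 3 + m) (-(ν * θ)))
        + (a / (C * b) * (ν ^ 2 * (1 + a) * (2 + a) / ((1 + b) * (2 + b)))) *
          (poch (a + 3) m / poch (b + 3) m * ν ^ m / (Nat.factorial m : ℝ) *
            kummerM (a + 3 + m) (b + 3 + m) (-(ν * θ))) := by
    intro m
    have hfac : (Nat.factorial (m + 2) : ℝ)
        = ((m : ℝ) + 2) * ((m : ℝ) + 1) * (Nat.factorial m : ℝ) := by
      rw [Nat.factorial_succ, Nat.factorial_succ]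
      push_cast
      ring
    have e1 : a + ((m : ℝ) + 2) = a + 2 + (m : ℝ) := by ring
    have e2 : (1 : ℝ) + b + ((m : ℝ) + 2) = b + 3 + (m : ℝ) := by ring
    have e3 : (1 : ℝ) + a + ((m : ℝ) + 2) = a + 3 + (m : ℝ) := by ring
    have e4 : (1 : ℝ) + b + 2 = b + 3 := by ring
    have e5 : (1 : ℝ) + a + 2 = a + 3 := by ring
    have hp0 := (poch_pos (show (0:ℝ) < 1 + b by linarith) (m + 2)).ne'
    have hp1 := (poch_pos (show (0:ℝ) < b + 3 by linarith) m).ne'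
    have hfm : (Nat.factorial m : ℝ) ≠ 0 := by positivity
    have hb1 : ((1:ℝ) + b) ≠ 0 := by linarith
    have hb2 : ((2:ℝ) + b) ≠ 0 := by linarith
    simp only [hg, P0, P1, ← hC]
    push_cast
    rw [e1, e2, e3, hfac, poch_two_add a m, poch_two_add (1 + b) m,
      poch_two_add (1 + a) m, e4, e5]
    rw [show (1:ℝ) + b + 1 = 2 + b by ring, show (1:ℝ) + a + 1 = 2 + a by ring]
    have hm2 : ((m:ℝ) + 2) ≠ 0 := by positivity
    have hm1 : ((m:ℝ) + 1) ≠ 0 := by positivity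
    generalize (b - a) / (C * b) = u
    generalize a / (C * b) = v
    field_simp
    ring
  -- summability
  have hsummShift : Summable (fun m : ℕ => g (m + 2)) := by
    rw [funext key]
    exact (h0.1.mul_left _).add (h1.1.mul_left _)
  have hsumm : Summable g := (summable_nat_add_iff 2).1 hsummShift
  refine ⟨hsumm, ?_⟩
  have htail : ∑' m : ℕ, g (m + 2)
      = ((b - a) / (C * b) * (ν ^ 2 * a * (a + 1) / ((1 + b) * (2 + b)))) *
          kummerM (a + 2) (b + 3) (ν * (1 - θ))
        + (a / (C * b) * (ν ^ 2 * (1 + a) * (2 + a) / ((1 + b) * (2 + b)))) *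
          kummerM (a + 3) (b + 3) (ν * (1 - θ)) := by
    rw [funext key, Summable.tsum_add (h0.1.mul_left _) (h1.1.mul_left _),
      tsum_mul_left, tsum_mul_left, h0.2, h1.2]
  have hsplit : ∑' n : ℕ, g n = ∑' m : ℕ, g (m + 2) := by
    rw [← Summable.sum_add_tsum_nat_add 2 hsumm]
    have : ∑ i ∈ Finset.range 2, g i = 0 := by
      rw [Finset.sum_range_succ, Finset.sum_range_one]
      simp [hg]
    rw [this, zero_add]
  show ∑' n : ℕ, g n = _
  rw [hsplit, htail]
  -- contiguous relation
  have contig := kummer_contig (a := a + 2) (b := b + 2)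
    (show (0:ℝ) < a + 2 by linarith) (show (0:ℝ) < b + 2 by linarith) (ν * (1 - θ))
  rw [show (b:ℝ) + 2 + 1 = b + 3 by ring, show (a:ℝ) + 2 + 1 = a + 3 by ring] at contig
  rcases eq_or_ne C 0 with hC0 | hC0
  · rw [hC0]
    simp
  · have hbb : b ≠ 0 := hb.ne'
    have hb1 : ((1:ℝ) + b) ≠ 0 := by linarith
    have hb2 : ((2:ℝ) + b) ≠ 0 := by linarith
    have hb3 : ((b:ℝ) + 1) ≠ 0 := by linarith
    have hb4 : (b:ℝ) + 2 ≠ 0 := by linarith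
    have hMc : kummerM (a + 2) (b + 2) (ν * (1 - θ))
        = ((b + 2 - (a + 2)) * kummerM (a + 2) (b + 3) (ν * (1 - θ))
            + (a + 2) * kummerM (a + 3) (b + 3) (ν * (1 - θ))) / (b + 2) := by
      rw [eq_div_iff hb4]
      linarith [contig]
    rw [hMc]
    field_simp
    ring
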